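/- Let V be a regular L⁰(𝓕)-module containing two L⁰(𝓕)-independent elements. Then for any x, y ∈ V there exist two L⁰(𝓕)-independent elements x₁, y₁ ∈ V such that both x and y belong to the free L⁰(𝓕)-submodule {ξx₁ + ηy₁ : ξ, η ∈ L⁰(𝓕)} generated by x₁ and y₁. -/

import Mathlib

open MeasureTheory

/-- `L⁰(𝓕)` is a commutative algebra; Mathlib lacks the ring instance on `AEEqFun`,
so we provide it by transporting proofs along the injection into germs. -/
noncomputable instance AEEqFun.instCommRingReal {Ω : Type*} [MeasurableSpace Ω]
    {P : Measure Ω} : CommRing (Ω →ₘ[P] ℝ) :=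
  { AEEqFun.instAddCommGroup, AEEqFun.instCommMonoid with
    left_distrib := fun f g h => AEEqFun.toGerm_injective <| by
      simp only [AEEqFun.mul_toGerm, AEEqFun.add_toGerm, mul_add]
    right_distrib := fun f g h => AEEqFun.toGerm_injective <| by
      simp only [AEEqFun.mul_toGerm, AEEqFun.add_toGerm, add_mul]
    zero_mul := fun f => AEEqFun.toGerm_injective <| by
      simp only [AEEqFun.mul_toGerm, AEEqFun.zero_toGerm, zero_mul]
    mul_zero := fun f => AEEqFun.toGerm_injective <| by
      simp only [AEEqFun.mul_toGerm, AEEqFun.zero_toGerm, mul_zero] }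

namespace L0

variable {Ω : Type*} [MeasurableSpace Ω]

/-- `ind P A hA` is `Ĩ_A`, the equivalence class in `L⁰(𝓕)` of the indicator
function of the measurable set `A`. -/
noncomputable def ind (P : Measure Ω) (A : Set Ω) (hA : MeasurableSet A) : Ω →ₘ[P] ℝ :=
  AEEqFun.mk (A.indicator fun _ => (1 : ℝ))
    (measurable_const.indicator hA).aestronglyMeasurable

variable (P : Measure Ω)

/-- An `L⁰(𝓕)`-module `V` is regular if `x = y` whenever there is a countable
measurable partition `{Aₙ}` of `Ω` with `Ĩ_{Aₙ}·x = Ĩ_{Aₙ}·y` for all `n`. -/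
def IsRegular (V : Type*) [AddCommGroup V] [Module (Ω →ₘ[P] ℝ) V] : Prop :=
  ∀ x y : V,
    (∃ (A : ℕ → Set Ω) (hA : ∀ n, MeasurableSet (A n)),
      (∀ m n, m ≠ n → A m ∩ A n = ∅) ∧ (⋃ n, A n) = Set.univ ∧
      ∀ n, ind P (A n) (hA n) • x = ind P (A n) (hA n) • y) → x = y

/-- `T : V → V'` is stable if `T(Ĩ_A·x + Ĩ_{Aᶜ}·y) = Ĩ_A·T(x) + Ĩ_{Aᶜ}·T(y)`. -/
def IsStable {V V' : Type*} [AddCommGroup V] [Module (Ω →ₘ[P] ℝ) V]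
    [AddCommGroup V'] [Module (Ω →ₘ[P] ℝ) V'] (T : V → V') : Prop :=
  ∀ (x y : V) (A : Set Ω) (hA : MeasurableSet A),
    T (ind P A hA • x + ind P Aᶜ hA.compl • y)
      = ind P A hA • T x + ind P Aᶜ hA.compl • T y

/-- `T : V → V'` has the local property if `Ĩ_A·T(x) = Ĩ_A·T(Ĩ_A·x)`. -/
def HasLocalProperty {V V' : Type*} [AddCommGroup V] [Module (Ω →ₘ[P] ℝ) V]
    [AddCommGroup V'] [Module (Ω →ₘ[P] ℝ) V'] (T : V → V') : Prop :=
  ∀ (x : V) (A : Set Ω) (hA : MeasurableSet A),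
    ind P A hA • T x = ind P A hA • T (ind P A hA • x)

/-- `T : V → V'` is `L⁰`-affine if `T = S + b` with `S` an `L⁰`-linear map
(that is, a module homomorphism) and `b ∈ V'`. -/
def IsL0Affine {V V' : Type*} [AddCommGroup V] [Module (Ω →ₘ[P] ℝ) V]
    [AddCommGroup V'] [Module (Ω →ₘ[P] ℝ) V'] (T : V → V') : Prop :=
  ∃ (S : V →ₗ[Ω →ₘ[P] ℝ] V') (b : V'), ∀ x : V, T x = S x + b

/-- The `L⁰`-line segment `[x,y] = {λx + (1−λ)y : λ ∈ L⁰(𝓕), 0 ≤ λ ≤ 1}`. -/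
def seg {V : Type*} [AddCommGroup V] [Module (Ω →ₘ[P] ℝ) V] (x y : V) : Set V :=
  {z | ∃ lam : Ω →ₘ[P] ℝ, 0 ≤ lam ∧ lam ≤ 1 ∧ z = lam • x + (1 - lam) • y}

/-- The `L⁰`-line `l(x,y) = {λx + (1−λ)y : λ ∈ L⁰(𝓕)}`. -/
def line {V : Type*} [AddCommGroup V] [Module (Ω →ₘ[P] ℝ) V] (x y : V) : Set V :=
  {z | ∃ lam : Ω →ₘ[P] ℝ, z = lam • x + (1 - lam) • y}

/-- `x, y ∈ V` are `L⁰(𝓕)`-independent if `ξx + ηy = 0` implies `ξ = η = 0`. -/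
def Indep {V : Type*} [AddCommGroup V] [Module (Ω →ₘ[P] ℝ) V] (x y : V) : Prop :=
  ∀ ξ η : Ω →ₘ[P] ℝ, ξ • x + η • y = 0 → ξ = 0 ∧ η = 0

/-- `x ∈ V` has full support if `Ĩ_A·x = 0` implies `P(A) = 0`. -/
def FullSupport {V : Type*} [AddCommGroup V] [Module (Ω →ₘ[P] ℝ) V] (x : V) : Prop :=
  ∀ (A : Set Ω) (hA : MeasurableSet A), ind P A hA • x = 0 → P A = 0

end L0

section Helpers

open L0 Set

variable {Ω : Type*} [MeasurableSpace Ω] {P : Measure Ω}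

lemma ind_mul_ind {A B : Set Ω} (hA : MeasurableSet A) (hB : MeasurableSet B) :
    ind P A hA * ind P B hB = ind P (A ∩ B) (hA.inter hB) := by
  rw [ind, ind, ind, AEEqFun.mk_mul_mk]
  exact AEEqFun.mk_eq_mk.2 (Filter.Eventually.of_forall fun ω => by
    simp only [Pi.mul_apply, Set.indicator_apply, Set.mem_inter_iff]
    by_cases h1 : ω ∈ A <;> by_cases h2 : ω ∈ B <;> simp [h1, h2])

lemma ind_congr {A B : Set Ω} (hA : MeasurableSet A) (hB : MeasurableSet B) (h : A = B) :
    ind P A hA = ind P B hB := by subst h; rfl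

lemma ind_univ : ind P Set.univ MeasurableSet.univ = (1 : Ω →ₘ[P] ℝ) := by
  rw [ind, AEEqFun.one_def]
  exact AEEqFun.mk_eq_mk.2 (Filter.Eventually.of_forall fun ω => by simp)

lemma ind_eq_zero {A : Set Ω} (hA : MeasurableSet A) (h : P A = 0) :
    ind P A hA = (0 : Ω →ₘ[P] ℝ) := by
  rw [ind, AEEqFun.zero_def]
  refine AEEqFun.mk_eq_mk.2 ?_
  filter_upwards [measure_eq_zero_iff_ae_notMem.mp h] with ω hω
  simp [Set.indicator_apply, hω]

lemma ind_eq_zero_iff {A : Set Ω} (hA : MeasurableSet A) :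
    ind P A hA = (0 : Ω →ₘ[P] ℝ) ↔ P A = 0 := by
  refine ⟨fun h => ?_, ind_eq_zero hA⟩
  rw [ind, AEEqFun.zero_def, AEEqFun.mk_eq_mk] at h
  refine measure_eq_zero_iff_ae_notMem.mpr ?_
  filter_upwards [h] with ω hω
  intro hmem
  simp [Set.indicator_apply, hmem] at hω

lemma ind_add_ind {A B : Set Ω} (hA : MeasurableSet A) (hB : MeasurableSet B)
    (h : A ∩ B = ∅) :
    ind P A hA + ind P B hB = ind P (A ∪ B) (hA.union hB) := by
  rw [ind, ind, ind, AEEqFun.mk_add_mk]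
  refine AEEqFun.mk_eq_mk.2 (Filter.Eventually.of_forall fun ω => ?_)
  rw [Set.indicator_union_of_disjoint (Set.disjoint_iff_inter_eq_empty.mpr h)]
  simp

variable {V : Type*} [AddCommGroup V] [Module (Ω →ₘ[P] ℝ) V]

lemma ind_smul_ind_smul {A B : Set Ω} (hA : MeasurableSet A) (hB : MeasurableSet B) (x : V) :
    ind P A hA • (ind P B hB • x) = ind P (A ∩ B) (hA.inter hB) • x := by
  rw [smul_smul, ind_mul_ind]

lemma ind_smul_of_subset {A B : Set Ω} (hA : MeasurableSet A) (hB : MeasurableSet B)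
    (h : A ⊆ B) (x : V) : ind P A hA • (ind P B hB • x) = ind P A hA • x := by
  rw [ind_smul_ind_smul, ind_congr (hA.inter hB) hA (Set.inter_eq_self_of_subset_left h)]

lemma ind_smul_of_disjoint {A B : Set Ω} (hA : MeasurableSet A) (hB : MeasurableSet B)
    (h : A ∩ B = ∅) (x : V) : ind P A hA • (ind P B hB • x) = 0 := by
  rw [ind_smul_ind_smul, ind_eq_zero _ (by rw [h]; exact measure_empty), zero_smul]

end Helpers
section Extract
open L0 Set
variable {Ω : Type*} [MeasurableSpace Ω] {P : Measure Ω}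

lemma exists_ind_of_ne_zero {ξ : Ω →ₘ[P] ℝ} {S : Set Ω} (hS : MeasurableSet S)
    (hsupp : ind P S hS * ξ = ξ) (hne : ξ ≠ 0) :
    ∃ (B : Set Ω) (hB : MeasurableSet B), B ⊆ S ∧ P B ≠ 0 ∧
      ∃ θ : Ω →ₘ[P] ℝ, θ * ξ = ind P B hB := by
  have hg := ξ.aestronglyMeasurable
  set g : Ω → ℝ := hg.mk ξ with hgdef
  have hgm : Measurable g := hg.stronglyMeasurable_mk.measurable
  have hmk : AEEqFun.mk g hgm.aestronglyMeasurable = ξ := by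
    rw [← AEEqFun.mk_coeFn ξ]
    exact AEEqFun.mk_eq_mk.2 hg.ae_eq_mk.symm
  have hBm : MeasurableSet {ω | g ω ≠ 0} := by
    have := hgm (MeasurableSet.compl (measurableSet_singleton (0:ℝ)))
    exact this
  refine ⟨S ∩ {ω | g ω ≠ 0}, hS.inter hBm, Set.inter_subset_left, ?_, ?_⟩
  · -- P B ≠ 0
    intro h0
    apply hne
    rw [← hmk, AEEqFun.zero_def, AEEqFun.mk_eq_mk]
    have hae : (S.indicator (fun _ => (1:ℝ))) * g =ᵐ[P] g := by
      have : ind P S hS * AEEqFun.mk g hgm.aestronglyMeasurable = AEEqFun.mk g hgm.aestronglyMeasurable := by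
        rw [hmk]; exact hsupp
      rw [ind, AEEqFun.mk_mul_mk, AEEqFun.mk_eq_mk] at this
      exact this
    filter_upwards [measure_eq_zero_iff_ae_notMem.mp h0, hae] with ω hω hae2
    by_contra hgω
    apply hω
    refine ⟨?_, hgω⟩
    by_contra hωS
    rw [Pi.mul_apply, Set.indicator_of_notMem hωS, zero_mul] at hae2
    exact hgω hae2.symm
  · -- θ
    refine ⟨AEEqFun.mk ((S ∩ {ω | g ω ≠ 0}).indicator fun ω => (g ω)⁻¹)
      ((hgm.inv.indicator (hS.inter hBm)).aestronglyMeasurable), ?_⟩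
    rw [← hmk, AEEqFun.mk_mul_mk, ind]
    refine AEEqFun.mk_eq_mk.2 (Filter.Eventually.of_forall fun ω => ?_)
    by_cases hω : ω ∈ S ∩ {ω | g ω ≠ 0}
    · rw [Pi.mul_apply, Set.indicator_of_mem hω]
      rw [Set.indicator_of_mem hω]
      exact inv_mul_cancel₀ hω.2
    · rw [Pi.mul_apply, Set.indicator_of_notMem hω, Set.indicator_of_notMem hω, zero_mul]
end Extract
section Glue
set_option linter.unusedSectionVars false
open L0 Set
variable {Ω : Type*} [MeasurableSpace Ω] {P : Measure Ω}
variable {V : Type*} [AddCommGroup V] [Module (Ω →ₘ[P] ℝ) V]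

/-- The standard partition refining a countable union. -/
private def part (A : ℕ → Set Ω) : ℕ → Set Ω
  | 0 => (⋃ n, A n)ᶜ
  | (n+1) => disjointed A n

private lemma part_zero (A : ℕ → Set Ω) : part A 0 = (⋃ n, A n)ᶜ := rfl

private lemma part_meas {A : ℕ → Set Ω} (hA : ∀ n, MeasurableSet (A n)) (n : ℕ) :
    MeasurableSet (part A n) := by
  cases n with
  | zero => exact (MeasurableSet.iUnion hA).compl
  | succ k => exact MeasurableSet.disjointed hA k

private lemma part_disj (A : ℕ → Set Ω) : ∀ m n, m ≠ n → part A m ∩ part A n = ∅ := by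
  have hsub : ∀ k, part A (k+1) ⊆ ⋃ n, A n := fun k =>
    (disjointed_subset A k).trans (Set.subset_iUnion A k)
  intro m n hmn
  match m, n with
  | 0, 0 => exact absurd rfl hmn
  | 0, (k+1) => exact Set.eq_empty_of_forall_notMem fun ω hω => hω.1 (hsub k hω.2)
  | (k+1), 0 => exact Set.eq_empty_of_forall_notMem fun ω hω => hω.2 (hsub k hω.1)
  | (j+1), (k+1) =>
    exact Set.disjoint_iff_inter_eq_empty.mp
      (disjoint_disjointed A (fun h => hmn (by rw [h])))

private lemma part_union (A : ℕ → Set Ω) : (⋃ n, part A n) = Set.univ := by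
  rw [Set.iUnion_eq_univ_iff]
  intro ω
  by_cases hω : ω ∈ ⋃ n, A n
  · rw [← iUnion_disjointed] at hω
    obtain ⟨k, hk⟩ := Set.mem_iUnion.mp hω
    exact ⟨k + 1, hk⟩
  · exact ⟨0, hω⟩

private lemma part_subset {A : ℕ → Set Ω} (k : ℕ) : part A (k+1) ⊆ A k :=
  disjointed_subset A k

lemma glue_zero (hV : IsRegular P V) (z : V) (A : ℕ → Set Ω)
    (hA : ∀ n, MeasurableSet (A n)) (h : ∀ n, ind P (A n) (hA n) • z = 0) :
    ind P (⋃ n, A n) (MeasurableSet.iUnion hA) • z = 0 := by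
  refine hV _ _ ⟨part A, part_meas hA, part_disj A, part_union A, fun n => ?_⟩
  rw [smul_zero]
  cases n with
  | zero =>
    rw [ind_congr (part_meas hA 0) (MeasurableSet.iUnion hA).compl (part_zero A),
      ind_smul_of_disjoint _ _ (Set.compl_inter_self _) z]
  | succ k =>
    rw [ind_smul_of_subset _ _ ((part_subset k).trans (Set.subset_iUnion A k)) z,
      ← ind_smul_of_subset (part_meas hA (k+1)) (hA k) (part_subset k) z, h k, smul_zero]

lemma glue_mult (hV : IsRegular P V) (u v : V) (A : ℕ → Set Ω)
    (hA : ∀ n, MeasurableSet (A n))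
    (h : ∀ n, ∃ κ : Ω →ₘ[P] ℝ,
      ind P (A n) (hA n) • v = (κ * ind P (A n) (hA n)) • u) :
    ∃ κ : Ω →ₘ[P] ℝ, ind P (⋃ n, A n) (MeasurableSet.iUnion hA) • v
      = (κ * ind P (⋃ n, A n) (MeasurableSet.iUnion hA)) • u := by
  classical
  choose κ hκ using h
  -- measurable representatives of the κ's
  set w : ℕ → Ω → ℝ := fun n => Nat.casesOn n (fun _ => (0:ℝ))
    (fun k => (κ k).aestronglyMeasurable.mk (κ k)) with hwdef
  have hwm : ∀ n, Measurable (w n) := by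
    intro n
    cases n with
    | zero => exact measurable_const
    | succ k => exact (κ k).aestronglyMeasurable.stronglyMeasurable_mk.measurable
  have hwmk : ∀ k, AEEqFun.mk (w (k+1)) (hwm (k+1)).aestronglyMeasurable = κ k := by
    intro k
    rw [← AEEqFun.mk_coeFn (κ k)]
    exact AEEqFun.mk_eq_mk.2 (κ k).aestronglyMeasurable.ae_eq_mk.symm
  have hcov : ∀ ω, ∃ n, ω ∈ part A n := fun ω =>
    Set.iUnion_eq_univ_iff.mp (part_union A) ω
  set g : Ω → ℝ := fun ω => w (Nat.find (hcov ω)) ω with hgdef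
  have hgm : Measurable g := Measurable.find (p := fun n ω => ω ∈ part A n) hwm (fun n => part_meas hA n) hcov
  have hkey : ∀ n ω, ω ∈ part A n → g ω = w n ω := by
    intro n ω hω
    have h1 : ω ∈ part A (Nat.find (hcov ω)) := Nat.find_spec (hcov ω)
    have h2 : Nat.find (hcov ω) = n := by
      by_contra hne
      have := part_disj A _ _ hne
      exact absurd (Set.mem_inter h1 hω) (by rw [this]; exact Set.notMem_empty ω)
    rw [hgdef]; simp only []; rw [h2]
  refine ⟨AEEqFun.mk g hgm.aestronglyMeasurable, ?_⟩
  have hUm : MeasurableSet (⋃ n, A n) := MeasurableSet.iUnion hA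
  refine hV _ _ ⟨part A, part_meas hA, part_disj A, part_union A, fun n => ?_⟩
  cases n with
  | zero =>
    rw [ind_congr (part_meas hA 0) hUm.compl (part_zero A),
      ind_smul_of_disjoint _ _ (Set.compl_inter_self _) v, smul_smul]
    have h1 : ind P (⋃ n, A n)ᶜ hUm.compl
          * (AEEqFun.mk g hgm.aestronglyMeasurable * ind P (⋃ n, A n) hUm)
        = (AEEqFun.mk g hgm.aestronglyMeasurable)
          * (ind P (⋃ n, A n)ᶜ hUm.compl * ind P (⋃ n, A n) hUm) := by
      ring
    rw [h1, ind_mul_ind, ind_eq_zero _ (by rw [Set.compl_inter_self]; exact measure_empty),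
      mul_zero, zero_smul]
  | succ k =>
    have hsubU : part A (k+1) ⊆ ⋃ n, A n := (part_subset k).trans (Set.subset_iUnion A k)
    rw [ind_smul_of_subset _ _ hsubU v,
      ← ind_smul_of_subset (part_meas hA (k+1)) (hA k) (part_subset k) v, hκ k,
      smul_smul, smul_smul]
    have hDk : ind P (part A (k+1)) (part_meas hA (k+1)) * (κ k * ind P (A k) (hA k))
        = ind P (part A (k+1)) (part_meas hA (k+1)) * κ k := by
      rw [← mul_assoc, mul_comm _ (κ k), mul_assoc, ind_mul_ind,
        ind_congr _ (part_meas hA (k+1)) (Set.inter_eq_self_of_subset_left (part_subset k)),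
        mul_comm]
    have hU2 : ind P (part A (k+1)) (part_meas hA (k+1))
          * (AEEqFun.mk g hgm.aestronglyMeasurable * ind P (⋃ n, A n) hUm)
        = ind P (part A (k+1)) (part_meas hA (k+1)) * AEEqFun.mk g hgm.aestronglyMeasurable := by
      rw [mul_comm (AEEqFun.mk g hgm.aestronglyMeasurable) (ind P (⋃ n, A n) hUm), ← mul_assoc,
        ind_mul_ind, ind_congr _ (part_meas hA (k+1)) (Set.inter_eq_self_of_subset_left hsubU)]
    rw [hDk, hU2]
    -- now: ind Dk * κ k = ind Dk * mk g
    have : ind P (part A (k+1)) (part_meas hA (k+1)) * κ k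
        = ind P (part A (k+1)) (part_meas hA (k+1)) * AEEqFun.mk g hgm.aestronglyMeasurable := by
      rw [← hwmk k, ind, AEEqFun.mk_mul_mk, AEEqFun.mk_mul_mk]
      refine AEEqFun.mk_eq_mk.2 (Filter.Eventually.of_forall fun ω => ?_)
      simp only [Pi.mul_apply]
      by_cases hω : ω ∈ part A (k+1)
      · rw [hkey (k+1) ω hω]
      · rw [Set.indicator_of_notMem hω, zero_mul, zero_mul]
    rw [this]
end Glue
section Maximal
set_option linter.unusedSectionVars false
open L0 Set
open scoped ENNReal
variable {Ω : Type*} [MeasurableSpace Ω] {P : Measure Ω} [IsProbabilityMeasure P]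

lemma exists_maximal (Q : Set Ω → Prop) (h0 : Q ∅)
    (hmeas : ∀ B, Q B → MeasurableSet B)
    (hU : ∀ (A : ℕ → Set Ω), (∀ n, Q (A n)) → Q (⋃ n, A n)) :
    ∃ M : Set Ω, Q M ∧ ∀ B, Q B → P (B \ M) = 0 := by
  classical
  set s : ℝ≥0∞ := ⨆ (B : Set Ω) (_ : Q B), P B with hs
  have hsle : ∀ B, Q B → P B ≤ s := fun B hB =>
    le_iSup_of_le B (le_iSup_of_le hB le_rfl)
  have hseq : ∀ n : ℕ, ∃ B, Q B ∧ s ≤ P B + (n+1 : ℝ≥0∞)⁻¹ := by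
    intro n
    by_cases hs0 : s = 0
    · exact ⟨∅, h0, by rw [hs0]; exact zero_le⟩
    · have hstop : s ≠ ∞ := ne_of_lt (lt_of_le_of_lt
        (iSup_le fun B => iSup_le fun hB => prob_le_one) ENNReal.one_lt_top)
      have hlt : s - (n+1 : ℝ≥0∞)⁻¹ < s := ENNReal.sub_lt_self hstop hs0 (by simp)
      obtain ⟨B, hBQ, hB⟩ : ∃ B, Q B ∧ s - (n+1 : ℝ≥0∞)⁻¹ < P B := by
        by_contra hc
        push_neg at hc
        have : s ≤ s - (n+1 : ℝ≥0∞)⁻¹ :=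
          iSup_le fun B => iSup_le fun hB => hc B hB
        exact absurd (lt_of_le_of_lt this hlt) (lt_irrefl s)
      refine ⟨B, hBQ, ?_⟩
      calc s ≤ (s - (n+1 : ℝ≥0∞)⁻¹) + (n+1 : ℝ≥0∞)⁻¹ := le_tsub_add
        _ ≤ P B + (n+1 : ℝ≥0∞)⁻¹ := add_le_add_left hB.le _
  choose A hAQ hAs using hseq
  refine ⟨⋃ n, A n, hU A hAQ, fun B hB => ?_⟩
  by_contra hne
  obtain ⟨n, hn⟩ := ENNReal.exists_inv_nat_lt hne
  have hBn : P (B \ A n) ≤ (n+1 : ℝ≥0∞)⁻¹ := by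
    have hBAn : Q (B ∪ A n) := by
      have := hU (fun k => Nat.casesOn k B (fun _ => A n)) (by
        intro k; cases k with
        | zero => exact hB
        | succ j => exact hAQ n)
      have he : (⋃ k, (Nat.casesOn k B (fun _ => A n) : Set Ω)) = B ∪ A n := by
        apply Set.Subset.antisymm
        · refine Set.iUnion_subset fun k => ?_
          cases k with
          | zero => exact Set.subset_union_left
          | succ j => exact Set.subset_union_right
        · refine Set.union_subset ?_ ?_
          · exact Set.subset_iUnion_of_subset 0 (le_refl _)
          · exact Set.subset_iUnion_of_subset 1 (le_refl _)
      rwa [he] at this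
    have h1 : P (B \ A n) ≤ P (B ∪ A n) - P (A n) := by
      rw [← Set.union_diff_right (s := B)]
      exact le_of_eq (measure_diff Set.subset_union_right
        (hmeas _ (hAQ n)).nullMeasurableSet (measure_ne_top P _))
    have h2 : P (B ∪ A n) - P (A n) ≤ s - P (A n) :=
      tsub_le_tsub_right (hsle _ hBAn) _
    have h3 : s - P (A n) ≤ (n+1 : ℝ≥0∞)⁻¹ :=
      tsub_le_iff_left.mpr (hAs n)
    exact h1.trans (h2.trans h3)
  have hsub : P (B \ ⋃ k, A k) ≤ P (B \ A n) :=
    measure_mono (Set.diff_subset_diff_right (Set.subset_iUnion A n))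
  have hfin : (↑n : ℝ≥0∞)⁻¹ < (n+1 : ℝ≥0∞)⁻¹ → False := by
    intro h
    exact absurd h (not_lt.mpr (ENNReal.inv_le_inv.mpr (by
      exact_mod_cast Nat.le_succ n)))
  exact hfin (lt_of_lt_of_le hn (hsub.trans hBn))
end Maximal
section Support
set_option linter.unusedSectionVars false
open L0 Set
variable {Ω : Type*} [MeasurableSpace Ω] {P : Measure Ω} [IsProbabilityMeasure P]
variable {V : Type*} [AddCommGroup V] [Module (Ω →ₘ[P] ℝ) V]

lemma P_eq_zero_of_disj {B M : Set Ω} (h : P (B \ M) = 0) (hd : B ∩ M = ∅) : P B = 0 := by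
  have he : B \ M = B := by
    ext ω
    exact ⟨fun h => h.1, fun hω => ⟨hω, fun hM =>
      Set.eq_empty_iff_forall_notMem.mp hd ω ⟨hω, hM⟩⟩⟩
  rwa [he] at h

lemma exists_maximal_van (hV : L0.IsRegular P V) (z : V) :
    ∃ (M : Set Ω) (hM : MeasurableSet M), ind P M hM • z = 0 ∧
      ∀ B (hB : MeasurableSet B), ind P B hB • z = 0 → P (B \ M) = 0 := by
  obtain ⟨M, hQ, hmax⟩ := exists_maximal (P := P)
    (fun B => ∃ hB : MeasurableSet B, ind P B hB • z = 0)
    ⟨MeasurableSet.empty, by rw [ind_eq_zero _ measure_empty, zero_smul]⟩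
    (fun B hB => hB.choose)
    (fun A hA => ⟨MeasurableSet.iUnion (fun n => (hA n).choose),
      glue_zero hV z A (fun n => (hA n).choose) (fun n => (hA n).choose_spec)⟩)
  exact ⟨M, hQ.choose, hQ.choose_spec, fun B hB h => hmax B ⟨hB, h⟩⟩

lemma exists_maximal_mult (hV : L0.IsRegular P V) (u v : V) :
    ∃ (M : Set Ω) (hM : MeasurableSet M) (κ : Ω →ₘ[P] ℝ),
      ind P M hM • v = (κ * ind P M hM) • u ∧
      ∀ B (hB : MeasurableSet B) (κ' : Ω →ₘ[P] ℝ),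
        ind P B hB • v = (κ' * ind P B hB) • u → P (B \ M) = 0 := by
  obtain ⟨M, hQ, hmax⟩ := exists_maximal (P := P)
    (fun B => ∃ hB : MeasurableSet B, ∃ κ : Ω →ₘ[P] ℝ,
      ind P B hB • v = (κ * ind P B hB) • u)
    ⟨MeasurableSet.empty, 0, by rw [ind_eq_zero _ measure_empty]; simp⟩
    (fun B hB => hB.choose)
    (fun A hA => ⟨MeasurableSet.iUnion (fun n => (hA n).choose),
      glue_mult hV u v A (fun n => (hA n).choose) (fun n => (hA n).choose_spec)⟩)
  exact ⟨M, hQ.choose, hQ.choose_spec.choose, hQ.choose_spec.choose_spec,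
    fun B hB κ' h => hmax B ⟨hB, κ', h⟩⟩

lemma two_mult {x₀ y₀ : V} (hInd : L0.Indep P x₀ y₀) (z : V) {B : Set Ω}
    (hB : MeasurableSet B) {a c : Ω →ₘ[P] ℝ}
    (h1 : ind P B hB • x₀ = (a * ind P B hB) • z)
    (h2 : ind P B hB • y₀ = (c * ind P B hB) • z) : P B = 0 := by
  have e1 : (c * ind P B hB) • x₀ = (c * (a * ind P B hB)) • z := by
    rw [mul_smul, h1, ← mul_smul]
  have e2 : (a * ind P B hB) • y₀ = (a * (c * ind P B hB)) • z := by
    rw [mul_smul, h2, ← mul_smul]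
  have key : (c * ind P B hB) • x₀ + (-(a * ind P B hB)) • y₀ = 0 := by
    rw [neg_smul, e1, e2, show c * (a * ind P B hB) = a * (c * ind P B hB) from by ring,
      add_neg_cancel]
  obtain ⟨hc, ha⟩ := hInd _ _ key
  have ha' : a * ind P B hB = 0 := neg_eq_zero.mp ha
  have hx : ind P B hB • x₀ = 0 := by rw [h1, ha', zero_smul]
  have h0 : ind P B hB • x₀ + (0 : Ω →ₘ[P] ℝ) • y₀ = 0 := by
    rw [hx, zero_smul, add_zero]
  have := (hInd _ _ h0).1
  rwa [ind_eq_zero_iff] at this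

lemma kill_snd {u v : V} {S : Set Ω} (hS : MeasurableSet S)
    (hloc : ∀ B (hB : MeasurableSet B), B ⊆ S → P B ≠ 0 →
      ¬ ∃ κ : Ω →ₘ[P] ℝ, ind P B hB • v = (κ * ind P B hB) • u)
    (ξ η : Ω →ₘ[P] ℝ)
    (heq : (ind P S hS * ξ) • u + (ind P S hS * η) • v = 0) :
    ind P S hS * η = 0 := by
  by_contra hne
  have hsupp : ind P S hS * (ind P S hS * η) = ind P S hS * η := by
    rw [← mul_assoc, ind_mul_ind, ind_congr _ hS (Set.inter_self S)]
  obtain ⟨B, hB, hBS, hPB, θ, hθ⟩ := exists_ind_of_ne_zero hS hsupp hne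
  apply hloc B hB hBS hPB
  refine ⟨-(θ * (ind P S hS * ξ)), ?_⟩
  have h2 := congrArg (fun w : V => (θ * ind P B hB) • w) heq
  simp only [smul_add, smul_zero, smul_smul] at h2
  have hcv : θ * ind P B hB * (ind P S hS * η) = ind P B hB := by
    rw [show θ * ind P B hB * (ind P S hS * η) = ind P B hB * (θ * (ind P S hS * η)) from
      by ring, hθ, ind_mul_ind, ind_congr _ hB (Set.inter_self B)]
  have hcu : θ * ind P B hB * (ind P S hS * ξ) = (θ * (ind P S hS * ξ)) * ind P B hB := by
    ring
  rw [hcv, hcu] at h2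
  rw [neg_mul, neg_smul]
  rw [add_comm] at h2
  exact eq_neg_of_add_eq_zero_left h2

lemma kill_fst {u : V} {S : Set Ω} (hS : MeasurableSet S)
    (hloc : ∀ B (hB : MeasurableSet B), B ⊆ S → P B ≠ 0 → ind P B hB • u ≠ 0)
    (ξ : Ω →ₘ[P] ℝ) (heq : (ind P S hS * ξ) • u = 0) : ind P S hS * ξ = 0 := by
  by_contra hne
  have hsupp : ind P S hS * (ind P S hS * ξ) = ind P S hS * ξ := by
    rw [← mul_assoc, ind_mul_ind, ind_congr _ hS (Set.inter_self S)]
  obtain ⟨B, hB, hBS, hPB, θ, hθ⟩ := exists_ind_of_ne_zero hS hsupp hne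
  apply hloc B hB hBS hPB
  rw [← hθ, mul_smul, heq, smul_zero]

lemma mult_restrict {u v : V} {M B : Set Ω} (hM : MeasurableSet M) (hB : MeasurableSet B)
    (hBM : B ⊆ M) {κ : Ω →ₘ[P] ℝ} (h : ind P M hM • v = (κ * ind P M hM) • u) :
    ind P B hB • v = (κ * ind P B hB) • u := by
  have h1 : ind P B hB • v = ind P B hB • (ind P M hM • v) :=
    (ind_smul_of_subset hB hM hBM v).symm
  rw [h1, h, smul_smul, show ind P B hB * (κ * ind P M hM)
      = κ * (ind P B hB * ind P M hM) from by ring, ind_mul_ind,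
    ind_congr (hB.inter hM) hB (Set.inter_eq_self_of_subset_left hBM)]
end Support
/-- If a regular `L⁰(𝓕)`-module `V` contains two `L⁰(𝓕)`-independent elements,
then any `x, y ∈ V` lie in a free `L⁰(𝓕)`-submodule of rank `2`, i.e. one
generated by two `L⁰(𝓕)`-independent elements `x₁, y₁`. -/
theorem stmt17 {Ω : Type*} [MeasurableSpace Ω] (P : Measure Ω) [IsProbabilityMeasure P]
    {V : Type*} [AddCommGroup V] [Module (Ω →ₘ[P] ℝ) V]
    (hV : L0.IsRegular P V) (hfree : ∃ x₀ y₀ : V, L0.Indep P x₀ y₀) :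
    ∀ x y : V, ∃ x₁ y₁ : V, L0.Indep P x₁ y₁ ∧
      (∃ ξ η : Ω →ₘ[P] ℝ, x = ξ • x₁ + η • y₁) ∧
      (∃ ξ η : Ω →ₘ[P] ℝ, y = ξ • x₁ + η • y₁) := by
  classical
  intro x y
  obtain ⟨x₀, y₀, hInd⟩ := hfree
  open L0 in
  obtain ⟨MA, hMA, hMAz, hMAmax⟩ := exists_maximal_van hV x
  obtain ⟨MY, hMY, hMYz, hMYmax⟩ := exists_maximal_van hV y
  obtain ⟨MC, hMC, κC, hMCe, hMCmax⟩ := exists_maximal_mult hV x y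
  obtain ⟨ME, hME, κE, hMEe, hMEmax⟩ := exists_maximal_mult hV y x₀
  obtain ⟨MG, hMG, κG, hMGe, hMGmax⟩ := exists_maximal_mult hV x y₀
  set A1 : Set Ω := MA ∩ MY with hA1d
  set A2 : Set Ω := MA \ MY with hA2d
  set C : Set Ω := MC \ MA with hCd
  set CE : Set Ω := C ∩ MG with hCEd
  set CF : Set Ω := C \ MG with hCFd
  set D : Set Ω := MAᶜ \ MC with hDd
  set E : Set Ω := A2 ∩ ME with hEd
  set F : Set Ω := A2 \ ME with hFd
  have hA1 : MeasurableSet A1 := hMA.inter hMY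
  have hA2 : MeasurableSet A2 := hMA.diff hMY
  have hC : MeasurableSet C := hMC.diff hMA
  have hCE : MeasurableSet CE := hC.inter hMG
  have hCF : MeasurableSet CF := hC.diff hMG
  have hD : MeasurableSet D := hMA.compl.diff hMC
  have hE : MeasurableSet E := hA2.inter hME
  have hF : MeasurableSet F := hA2.diff hME
  -- set-theoretic facts
  have sfact : ∀ (S T : Set Ω), (∀ ω, ω ∈ S → ω ∈ T → False) → S ∩ T = ∅ := by
    intro S T h
    exact Set.eq_empty_iff_forall_notMem.mpr fun ω hω => h ω hω.1 hω.2
  have mA1 : ∀ ω, ω ∈ A1 ↔ ω ∈ MA ∧ ω ∈ MY := fun ω => by rw [hA1d]; exact Iff.rfl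
  have mA2 : ∀ ω, ω ∈ A2 ↔ ω ∈ MA ∧ ω ∉ MY := fun ω => by rw [hA2d]; exact Iff.rfl
  have mC : ∀ ω, ω ∈ C ↔ ω ∈ MC ∧ ω ∉ MA := fun ω => by rw [hCd]; exact Iff.rfl
  have mCE : ∀ ω, ω ∈ CE ↔ (ω ∈ MC ∧ ω ∉ MA) ∧ ω ∈ MG := fun ω => by
    rw [hCEd]; exact Iff.and (mC ω) Iff.rfl
  have mCF : ∀ ω, ω ∈ CF ↔ (ω ∈ MC ∧ ω ∉ MA) ∧ ω ∉ MG := fun ω => by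
    rw [hCFd]; exact Iff.and (mC ω) Iff.rfl
  have mD : ∀ ω, ω ∈ D ↔ ω ∉ MA ∧ ω ∉ MC := fun ω => by rw [hDd]; exact Iff.rfl
  have mE : ∀ ω, ω ∈ E ↔ (ω ∈ MA ∧ ω ∉ MY) ∧ ω ∈ ME := fun ω => by
    rw [hEd]; exact Iff.and (mA2 ω) Iff.rfl
  have mF : ∀ ω, ω ∈ F ↔ (ω ∈ MA ∧ ω ∉ MY) ∧ ω ∉ ME := fun ω => by
    rw [hFd]; exact Iff.and (mA2 ω) Iff.rfl
  have mcompl : ∀ ω, ω ∈ MAᶜ ↔ ω ∉ MA := fun ω => Iff.rfl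
  -- subsets
  have subA1MA : A1 ⊆ MA := fun ω h => ((mA1 ω).mp h).1
  have subA1MY : A1 ⊆ MY := fun ω h => ((mA1 ω).mp h).2
  have subEMA : E ⊆ MA := fun ω h => ((mE ω).mp h).1.1
  have subFMA : F ⊆ MA := fun ω h => ((mF ω).mp h).1.1
  have subA2MA : A2 ⊆ MA := fun ω h => ((mA2 ω).mp h).1
  have subEME : E ⊆ ME := fun ω h => ((mE ω).mp h).2
  have subEA2 : E ⊆ A2 := fun ω h => (mA2 ω).mpr ((mE ω).mp h).1
  have subFA2 : F ⊆ A2 := fun ω h => (mA2 ω).mpr ((mF ω).mp h).1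
  have subCMC : C ⊆ MC := fun ω h => ((mC ω).mp h).1
  have subCMAc : C ⊆ MAᶜ := fun ω h => ((mC ω).mp h).2
  have subCEC : CE ⊆ C := fun ω h => (mC ω).mpr ((mCE ω).mp h).1
  have subCFC : CF ⊆ C := fun ω h => (mC ω).mpr ((mCF ω).mp h).1
  have subCEMG : CE ⊆ MG := fun ω h => ((mCE ω).mp h).2
  have subCEMAc : CE ⊆ MAᶜ := subCEC.trans subCMAc
  have subCFMAc : CF ⊆ MAᶜ := subCFC.trans subCMAc
  have subCEMC : CE ⊆ MC := subCEC.trans subCMC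
  have subCFMC : CF ⊆ MC := subCFC.trans subCMC
  have subDMAc : D ⊆ MAᶜ := fun ω h => ((mD ω).mp h).1
  -- disjointness facts
  have dA1E : A1 ∩ E = ∅ := sfact _ _ fun ω h1 h2 => ((mE ω).mp h2).1.2 ((mA1 ω).mp h1).2
  have dA1F : A1 ∩ F = ∅ := sfact _ _ fun ω h1 h2 => ((mF ω).mp h2).1.2 ((mA1 ω).mp h1).2
  have dA1c : A1 ∩ MAᶜ = ∅ := sfact _ _ fun ω h1 h2 => h2 ((mA1 ω).mp h1).1
  have dEA1 : E ∩ A1 = ∅ := sfact _ _ fun ω h1 h2 => ((mE ω).mp h1).1.2 ((mA1 ω).mp h2).2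
  have dEF : E ∩ F = ∅ := sfact _ _ fun ω h1 h2 => ((mF ω).mp h2).2 ((mE ω).mp h1).2
  have dEc : E ∩ MAᶜ = ∅ := sfact _ _ fun ω h1 h2 => h2 ((mE ω).mp h1).1.1
  have dFA1 : F ∩ A1 = ∅ := sfact _ _ fun ω h1 h2 => ((mF ω).mp h1).1.2 ((mA1 ω).mp h2).2
  have dFE : F ∩ E = ∅ := sfact _ _ fun ω h1 h2 => ((mF ω).mp h1).2 ((mE ω).mp h2).2
  have dFc : F ∩ MAᶜ = ∅ := sfact _ _ fun ω h1 h2 => h2 ((mF ω).mp h1).1.1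
  have dA1A2 : A1 ∩ A2 = ∅ := sfact _ _ fun ω h1 h2 => ((mA2 ω).mp h2).2 ((mA1 ω).mp h1).2
  have dA1CE : A1 ∩ CE = ∅ := sfact _ _ fun ω h1 h2 => ((mCE ω).mp h2).1.2 ((mA1 ω).mp h1).1
  have dA1CF : A1 ∩ CF = ∅ := sfact _ _ fun ω h1 h2 => ((mCF ω).mp h2).1.2 ((mA1 ω).mp h1).1
  have dA1D : A1 ∩ D = ∅ := sfact _ _ fun ω h1 h2 => ((mD ω).mp h2).1 ((mA1 ω).mp h1).1
  have dA2A1 : A2 ∩ A1 = ∅ := sfact _ _ fun ω h1 h2 => ((mA2 ω).mp h1).2 ((mA1 ω).mp h2).2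
  have dA2CE : A2 ∩ CE = ∅ := sfact _ _ fun ω h1 h2 => ((mCE ω).mp h2).1.2 ((mA2 ω).mp h1).1
  have dA2CF : A2 ∩ CF = ∅ := sfact _ _ fun ω h1 h2 => ((mCF ω).mp h2).1.2 ((mA2 ω).mp h1).1
  have dA2D : A2 ∩ D = ∅ := sfact _ _ fun ω h1 h2 => ((mD ω).mp h2).1 ((mA2 ω).mp h1).1
  have dECE : E ∩ CE = ∅ := sfact _ _ fun ω h1 h2 => ((mCE ω).mp h2).1.2 ((mE ω).mp h1).1.1
  have dECF : E ∩ CF = ∅ := sfact _ _ fun ω h1 h2 => ((mCF ω).mp h2).1.2 ((mE ω).mp h1).1.1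
  have dED : E ∩ D = ∅ := sfact _ _ fun ω h1 h2 => ((mD ω).mp h2).1 ((mE ω).mp h1).1.1
  have dFCE : F ∩ CE = ∅ := sfact _ _ fun ω h1 h2 => ((mCE ω).mp h2).1.2 ((mF ω).mp h1).1.1
  have dFCF : F ∩ CF = ∅ := sfact _ _ fun ω h1 h2 => ((mCF ω).mp h2).1.2 ((mF ω).mp h1).1.1
  have dFD : F ∩ D = ∅ := sfact _ _ fun ω h1 h2 => ((mD ω).mp h2).1 ((mF ω).mp h1).1.1
  have dCEA1 : CE ∩ A1 = ∅ := sfact _ _ fun ω h1 h2 => ((mCE ω).mp h1).1.2 ((mA1 ω).mp h2).1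
  have dCEA2 : CE ∩ A2 = ∅ := sfact _ _ fun ω h1 h2 => ((mCE ω).mp h1).1.2 ((mA2 ω).mp h2).1
  have dCECF : CE ∩ CF = ∅ := sfact _ _ fun ω h1 h2 => ((mCF ω).mp h2).2 ((mCE ω).mp h1).2
  have dCED : CE ∩ D = ∅ := sfact _ _ fun ω h1 h2 => ((mD ω).mp h2).2 ((mCE ω).mp h1).1.1
  have dCFA1 : CF ∩ A1 = ∅ := sfact _ _ fun ω h1 h2 => ((mCF ω).mp h1).1.2 ((mA1 ω).mp h2).1
  have dCFA2 : CF ∩ A2 = ∅ := sfact _ _ fun ω h1 h2 => ((mCF ω).mp h1).1.2 ((mA2 ω).mp h2).1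
  have dCFCE : CF ∩ CE = ∅ := sfact _ _ fun ω h1 h2 => ((mCF ω).mp h1).2 ((mCE ω).mp h2).2
  have dCFD : CF ∩ D = ∅ := sfact _ _ fun ω h1 h2 => ((mD ω).mp h2).2 ((mCF ω).mp h1).1.1
  have dDA1 : D ∩ A1 = ∅ := sfact _ _ fun ω h1 h2 => ((mD ω).mp h1).1 ((mA1 ω).mp h2).1
  have dDA2 : D ∩ A2 = ∅ := sfact _ _ fun ω h1 h2 => ((mD ω).mp h1).1 ((mA2 ω).mp h2).1
  have dDCE : D ∩ CE = ∅ := sfact _ _ fun ω h1 h2 => ((mD ω).mp h1).2 ((mCE ω).mp h2).1.1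
  have dDCF : D ∩ CF = ∅ := sfact _ _ fun ω h1 h2 => ((mD ω).mp h1).2 ((mCF ω).mp h2).1.1
  have dEMY : E ∩ MY = ∅ := sfact _ _ fun ω h1 h2 => ((mE ω).mp h1).1.2 h2
  have dFMY : F ∩ MY = ∅ := sfact _ _ fun ω h1 h2 => ((mF ω).mp h1).1.2 h2
  have dFME : F ∩ ME = ∅ := sfact _ _ fun ω h1 h2 => ((mF ω).mp h1).2 h2
  have dCFMG : CF ∩ MG = ∅ := sfact _ _ fun ω h1 h2 => ((mCF ω).mp h1).2 h2
  have dDMC : D ∩ MC = ∅ := sfact _ _ fun ω h1 h2 => ((mD ω).mp h1).2 h2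
  have dCEMA : CE ∩ MA = ∅ := sfact _ _ fun ω h1 h2 => ((mCE ω).mp h1).1.2 h2
  have dCFMA : CF ∩ MA = ∅ := sfact _ _ fun ω h1 h2 => ((mCF ω).mp h1).1.2 h2
  have dDMA : D ∩ MA = ∅ := sfact _ _ fun ω h1 h2 => ((mD ω).mp h1).1 h2
  -- union facts
  have uEF : E ∪ F = A2 := by
    ext ω
    constructor
    · rintro (h | h)
      · exact (mA2 ω).mpr ((mE ω).mp h).1
      · exact (mA2 ω).mpr ((mF ω).mp h).1
    · intro h
      by_cases hme : ω ∈ ME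
      · exact Or.inl ((mE ω).mpr ⟨(mA2 ω).mp h, hme⟩)
      · exact Or.inr ((mF ω).mpr ⟨(mA2 ω).mp h, hme⟩)
  have uA12 : A1 ∪ A2 = MA := by
    ext ω
    constructor
    · rintro (h | h)
      · exact ((mA1 ω).mp h).1
      · exact ((mA2 ω).mp h).1
    · intro h
      by_cases hmy : ω ∈ MY
      · exact Or.inl ((mA1 ω).mpr ⟨h, hmy⟩)
      · exact Or.inr ((mA2 ω).mpr ⟨h, hmy⟩)
  have uCECF : CE ∪ CF = C := by
    ext ω
    constructor
    · rintro (h | h)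
      · exact (mC ω).mpr ((mCE ω).mp h).1
      · exact (mC ω).mpr ((mCF ω).mp h).1
    · intro h
      by_cases hmg : ω ∈ MG
      · exact Or.inl ((mCE ω).mpr ⟨(mC ω).mp h, hmg⟩)
      · exact Or.inr ((mCF ω).mpr ⟨(mC ω).mp h, hmg⟩)
  have uCD : C ∪ D = MAᶜ := by
    ext ω
    constructor
    · rintro (h | h)
      · exact ((mC ω).mp h).2
      · exact ((mD ω).mp h).1
    · intro h
      by_cases hmc : ω ∈ MC
      · exact Or.inl ((mC ω).mpr ⟨hmc, h⟩)
      · exact Or.inr ((mD ω).mpr ⟨h, hmc⟩)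
  have dCD : C ∩ D = ∅ := sfact _ _ fun ω h1 h2 => ((mD ω).mp h2).2 ((mC ω).mp h1).1
  -- indicator sums
  have hEFs : ind P E hE + ind P F hF = ind P A2 hA2 := by
    rw [ind_add_ind hE hF dEF, ind_congr _ hA2 uEF]
  have hA12s : ind P A1 hA1 + ind P A2 hA2 = ind P MA hMA := by
    rw [ind_add_ind hA1 hA2 dA1A2, ind_congr _ hMA uA12]
  have hCECFs : ind P CE hCE + ind P CF hCF = ind P C hC := by
    rw [ind_add_ind hCE hCF dCECF, ind_congr _ hC uCECF]
  have hCDs : ind P C hC + ind P D hD = ind P MAᶜ hMA.compl := by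
    rw [ind_add_ind hC hD dCD, ind_congr _ hMA.compl uCD]
  have hAAc : ind P MA hMA + ind P MAᶜ hMA.compl = 1 := by
    rw [ind_add_ind hMA hMA.compl (Set.inter_compl_self MA),
      ind_congr _ MeasurableSet.univ (Set.union_compl_self MA), ind_univ]
  have hsum : ind P A1 hA1 + ind P E hE + ind P F hF + ind P CE hCE + ind P CF hCF
      + ind P D hD = 1 := by
    calc ind P A1 hA1 + ind P E hE + ind P F hF + ind P CE hCE + ind P CF hCF + ind P D hD
        = (ind P A1 hA1 + (ind P E hE + ind P F hF))
          + ((ind P CE hCE + ind P CF hCF) + ind P D hD) := by ring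
      _ = (ind P A1 hA1 + ind P A2 hA2) + (ind P C hC + ind P D hD) := by
          rw [hEFs, hCECFs]
      _ = ind P MA hMA + ind P MAᶜ hMA.compl := by rw [hA12s, hCDs]
      _ = 1 := hAAc
  -- the generators
  set x₁ : V := ind P A1 hA1 • x₀ + ind P E hE • y₀ + ind P F hF • x₀
    + ind P MAᶜ hMA.compl • x with hx₁d
  set y₁ : V := ind P A1 hA1 • y₀ + ind P A2 hA2 • y + ind P CE hCE • x₀
    + ind P CF hCF • y₀ + ind P D hD • y with hy₁d
  -- localizations of x₁
  have locx : ∀ (S : Set Ω) (hS : MeasurableSet S), S ∩ A1 = ∅ → S ∩ E = ∅ → S ∩ F = ∅ →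
      S ⊆ MAᶜ → ind P S hS • x₁ = ind P S hS • x := by
    intro S hS h1 h2 h3 h4
    rw [hx₁d, smul_add, smul_add, smul_add, ind_smul_of_disjoint hS hA1 h1,
      ind_smul_of_disjoint hS hE h2, ind_smul_of_disjoint hS hF h3,
      ind_smul_of_subset hS hMA.compl h4, zero_add, zero_add, zero_add]
  have locxA1 : ind P A1 hA1 • x₁ = ind P A1 hA1 • x₀ := by
    rw [hx₁d, smul_add, smul_add, smul_add, ind_smul_of_subset hA1 hA1 (subset_refl _),
      ind_smul_of_disjoint hA1 hE dA1E, ind_smul_of_disjoint hA1 hF dA1F,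
      ind_smul_of_disjoint hA1 hMA.compl dA1c, add_zero, add_zero, add_zero]
  have locxE : ind P E hE • x₁ = ind P E hE • y₀ := by
    rw [hx₁d, smul_add, smul_add, smul_add, ind_smul_of_disjoint hE hA1 dEA1,
      ind_smul_of_subset hE hE (subset_refl _), ind_smul_of_disjoint hE hF dEF,
      ind_smul_of_disjoint hE hMA.compl dEc, zero_add, add_zero, add_zero]
  have locxF : ind P F hF • x₁ = ind P F hF • x₀ := by
    rw [hx₁d, smul_add, smul_add, smul_add, ind_smul_of_disjoint hF hA1 dFA1,
      ind_smul_of_disjoint hF hE dFE, ind_smul_of_subset hF hF (subset_refl _),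
      ind_smul_of_disjoint hF hMA.compl dFc, zero_add, zero_add, add_zero]
  -- localizations of y₁
  have locyA1 : ind P A1 hA1 • y₁ = ind P A1 hA1 • y₀ := by
    rw [hy₁d, smul_add, smul_add, smul_add, smul_add,
      ind_smul_of_subset hA1 hA1 (subset_refl _), ind_smul_of_disjoint hA1 hA2 dA1A2,
      ind_smul_of_disjoint hA1 hCE dA1CE, ind_smul_of_disjoint hA1 hCF dA1CF,
      ind_smul_of_disjoint hA1 hD dA1D, add_zero, add_zero, add_zero, add_zero]
  have locy : ∀ (S : Set Ω) (hS : MeasurableSet S), S ∩ A1 = ∅ → S ⊆ A2 → S ∩ CE = ∅ →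
      S ∩ CF = ∅ → S ∩ D = ∅ → ind P S hS • y₁ = ind P S hS • y := by
    intro S hS h1 h2 h3 h4 h5
    rw [hy₁d, smul_add, smul_add, smul_add, smul_add, ind_smul_of_disjoint hS hA1 h1,
      ind_smul_of_subset hS hA2 h2, ind_smul_of_disjoint hS hCE h3,
      ind_smul_of_disjoint hS hCF h4, ind_smul_of_disjoint hS hD h5,
      zero_add, add_zero, add_zero, add_zero]
  have locyCE : ind P CE hCE • y₁ = ind P CE hCE • x₀ := by
    rw [hy₁d, smul_add, smul_add, smul_add, smul_add, ind_smul_of_disjoint hCE hA1 dCEA1,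
      ind_smul_of_disjoint hCE hA2 dCEA2, ind_smul_of_subset hCE hCE (subset_refl _),
      ind_smul_of_disjoint hCE hCF dCECF, ind_smul_of_disjoint hCE hD dCED,
      zero_add, zero_add, add_zero, add_zero]
  have locyCF : ind P CF hCF • y₁ = ind P CF hCF • y₀ := by
    rw [hy₁d, smul_add, smul_add, smul_add, smul_add, ind_smul_of_disjoint hCF hA1 dCFA1,
      ind_smul_of_disjoint hCF hA2 dCFA2, ind_smul_of_disjoint hCF hCE dCFCE,
      ind_smul_of_subset hCF hCF (subset_refl _), ind_smul_of_disjoint hCF hD dCFD,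
      zero_add, zero_add, zero_add, add_zero]
  have locyD : ind P D hD • y₁ = ind P D hD • y := by
    rw [hy₁d, smul_add, smul_add, smul_add, smul_add, ind_smul_of_disjoint hD hA1 dDA1,
      ind_smul_of_disjoint hD hA2 dDA2, ind_smul_of_disjoint hD hCE dDCE,
      ind_smul_of_disjoint hD hCF dDCF, ind_smul_of_subset hD hD (subset_refl _),
      zero_add, zero_add, zero_add, zero_add]
  have locyA2 : ind P A2 hA2 • y₁ = ind P A2 hA2 • y :=
    locy A2 hA2 dA2A1 (subset_refl _) dA2CE dA2CF dA2D
  have locyE : ind P E hE • y₁ = ind P E hE • y := locy E hE dEA1 subEA2 dECE dECF dED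
  have locyF : ind P F hF • y₁ = ind P F hF • y := locy F hF dFA1 subFA2 dFCE dFCF dFD
  have dCEE : CE ∩ E = ∅ := sfact _ _ fun ω h1 h2 => ((mCE ω).mp h1).1.2 ((mE ω).mp h2).1.1
  have dCEF : CE ∩ F = ∅ := sfact _ _ fun ω h1 h2 => ((mCE ω).mp h1).1.2 ((mF ω).mp h2).1.1
  have dCFE : CF ∩ E = ∅ := sfact _ _ fun ω h1 h2 => ((mCF ω).mp h1).1.2 ((mE ω).mp h2).1.1
  have dCFF : CF ∩ F = ∅ := sfact _ _ fun ω h1 h2 => ((mCF ω).mp h1).1.2 ((mF ω).mp h2).1.1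
  have dDE : D ∩ E = ∅ := sfact _ _ fun ω h1 h2 => ((mD ω).mp h1).1 ((mE ω).mp h2).1.1
  have dDF : D ∩ F = ∅ := sfact _ _ fun ω h1 h2 => ((mD ω).mp h1).1 ((mF ω).mp h2).1.1
  have dcA1 : MAᶜ ∩ A1 = ∅ := sfact _ _ fun ω h1 h2 => h1 ((mA1 ω).mp h2).1
  have dcE : MAᶜ ∩ E = ∅ := sfact _ _ fun ω h1 h2 => h1 ((mE ω).mp h2).1.1
  have dcF : MAᶜ ∩ F = ∅ := sfact _ _ fun ω h1 h2 => h1 ((mF ω).mp h2).1.1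
  have locxCE : ind P CE hCE • x₁ = ind P CE hCE • x :=
    locx CE hCE dCEA1 dCEE dCEF subCEMAc
  have locxCF : ind P CF hCF • x₁ = ind P CF hCF • x :=
    locx CF hCF dCFA1 dCFE dCFF subCFMAc
  have locxD : ind P D hD • x₁ = ind P D hD • x := locx D hD dDA1 dDE dDF subDMAc
  have locxc : ind P MAᶜ hMA.compl • x₁ = ind P MAᶜ hMA.compl • x :=
    locx MAᶜ hMA.compl dcA1 dcE dcF (subset_refl _)
  have locxC : ind P C hC • x₁ = ind P C hC • x := by
    have h1 : ind P C hC = ind P CE hCE + ind P CF hCF := hCECFs.symm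
    rw [h1, add_smul, add_smul, locxCE, locxCF]
  -- vanishing of x on MA-subsets, y on MY-subsets
  have vanx : ∀ (S : Set Ω) (hS : MeasurableSet S), S ⊆ MA → ind P S hS • x = 0 := by
    intro S hS hsub
    rw [← ind_smul_of_subset hS hMA hsub x, hMAz, smul_zero]
  have vany : ∀ (S : Set Ω) (hS : MeasurableSet S), S ⊆ MY → ind P S hS • y = 0 := by
    intro S hS hsub
    rw [← ind_smul_of_subset hS hMY hsub y, hMYz, smul_zero]
  refine ⟨x₁, y₁, ?_, ?_, ?_⟩
  · -- independence
    intro ξ η heq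
    have piece : ∀ (S : Set Ω) (hS : MeasurableSet S) (u v : V),
        ind P S hS • x₁ = ind P S hS • u → ind P S hS • y₁ = ind P S hS • v →
        (ind P S hS * ξ) • u + (ind P S hS * η) • v = 0 := by
      intro S hS u v hu hv
      have h2 := congrArg (fun w : V => ind P S hS • w) heq
      simp only [smul_add, smul_zero] at h2
      have e1 : ind P S hS • (ξ • x₁) = (ind P S hS * ξ) • u := by
        rw [smul_smul, mul_comm, mul_smul, hu, ← mul_smul, mul_comm]
      have e2 : ind P S hS • (η • y₁) = (ind P S hS * η) • v := by
        rw [smul_smul, mul_comm, mul_smul, hv, ← mul_smul, mul_comm]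
      rw [e1, e2] at h2
      exact h2
    -- piece A1
    have pA1 := piece A1 hA1 x₀ y₀ locxA1 locyA1
    obtain ⟨hξA1, hηA1⟩ := hInd _ _ pA1
    -- piece E : (ind E ξ)•y₀ + (ind E η)•y = 0
    have pE := piece E hE y₀ y locxE locyE
    have hξE : ind P E hE * ξ = 0 := by
      refine kill_snd hE ?_ η ξ (by rw [add_comm] at pE; exact pE)
      intro B hB hBE hPB ⟨κ, hκ⟩
      have hBx₀ : ind P B hB • x₀ = (κE * ind P B hB) • y :=
        mult_restrict hME hB (hBE.trans subEME) hMEe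
      exact hPB (two_mult hInd y hB hBx₀ hκ)
    have hηE : ind P E hE * η = 0 := by
      refine kill_fst (u := y) hE ?_ η ?_
      · intro B hB hBE hPB hBy
        refine hPB (P_eq_zero_of_disj (hMYmax B hB hBy) ?_)
        exact Set.subset_empty_iff.mp ((Set.inter_subset_inter_left MY hBE).trans
          (le_of_eq dEMY))
      · rw [hξE, zero_smul, zero_add] at pE
        exact pE
    -- piece F : (ind F ξ)•x₀ + (ind F η)•y = 0
    have pF := piece F hF x₀ y locxF locyF
    have hξF : ind P F hF * ξ = 0 := by
      refine kill_snd hF ?_ η ξ (by rw [add_comm] at pF; exact pF)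
      intro B hB hBF hPB ⟨κ, hκ⟩
      refine hPB (P_eq_zero_of_disj (hMEmax B hB κ hκ) ?_)
      exact Set.subset_empty_iff.mp ((Set.inter_subset_inter_left ME hBF).trans
        (le_of_eq dFME))
    have hηF : ind P F hF * η = 0 := by
      refine kill_fst (u := y) hF ?_ η ?_
      · intro B hB hBF hPB hBy
        refine hPB (P_eq_zero_of_disj (hMYmax B hB hBy) ?_)
        exact Set.subset_empty_iff.mp ((Set.inter_subset_inter_left MY hBF).trans
          (le_of_eq dFMY))
      · rw [hξF, zero_smul, zero_add] at pF
        exact pF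
    -- piece CE : (ind CE ξ)•x + (ind CE η)•x₀ = 0
    have pCE := piece CE hCE x x₀ locxCE locyCE
    have hηCE : ind P CE hCE * η = 0 := by
      refine kill_snd hCE ?_ ξ η pCE
      intro B hB hBCE hPB ⟨κ, hκ⟩
      have hBy₀ : ind P B hB • y₀ = (κG * ind P B hB) • x :=
        mult_restrict hMG hB (hBCE.trans subCEMG) hMGe
      exact hPB (two_mult hInd x hB hκ hBy₀)
    have hξCE : ind P CE hCE * ξ = 0 := by
      refine kill_fst (u := x) hCE ?_ ξ ?_
      · intro B hB hBCE hPB hBx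
        refine hPB (P_eq_zero_of_disj (hMAmax B hB hBx) ?_)
        exact Set.subset_empty_iff.mp ((Set.inter_subset_inter_left MA hBCE).trans
          (le_of_eq dCEMA))
      · rw [hηCE, zero_smul, add_zero] at pCE
        exact pCE
    -- piece CF : (ind CF ξ)•x + (ind CF η)•y₀ = 0
    have pCF := piece CF hCF x y₀ locxCF locyCF
    have hηCF : ind P CF hCF * η = 0 := by
      refine kill_snd hCF ?_ ξ η pCF
      intro B hB hBCF hPB ⟨κ, hκ⟩
      refine hPB (P_eq_zero_of_disj (hMGmax B hB κ hκ) ?_)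
      exact Set.subset_empty_iff.mp ((Set.inter_subset_inter_left MG hBCF).trans
        (le_of_eq dCFMG))
    have hξCF : ind P CF hCF * ξ = 0 := by
      refine kill_fst (u := x) hCF ?_ ξ ?_
      · intro B hB hBCF hPB hBx
        refine hPB (P_eq_zero_of_disj (hMAmax B hB hBx) ?_)
        exact Set.subset_empty_iff.mp ((Set.inter_subset_inter_left MA hBCF).trans
          (le_of_eq dCFMA))
      · rw [hηCF, zero_smul, add_zero] at pCF
        exact pCF
    -- piece D : (ind D ξ)•x + (ind D η)•y = 0
    have pD := piece D hD x y locxD locyD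
    have hηD : ind P D hD * η = 0 := by
      refine kill_snd hD ?_ ξ η pD
      intro B hB hBD hPB ⟨κ, hκ⟩
      refine hPB (P_eq_zero_of_disj (hMCmax B hB κ hκ) ?_)
      exact Set.subset_empty_iff.mp ((Set.inter_subset_inter_left MC hBD).trans
        (le_of_eq dDMC))
    have hξD : ind P D hD * ξ = 0 := by
      refine kill_fst (u := x) hD ?_ ξ ?_
      · intro B hB hBD hPB hBx
        refine hPB (P_eq_zero_of_disj (hMAmax B hB hBx) ?_)
        exact Set.subset_empty_iff.mp ((Set.inter_subset_inter_left MA hBD).trans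
          (le_of_eq dDMA))
      · rw [hηD, zero_smul, add_zero] at pD
        exact pD
    constructor
    · have : ξ = (ind P A1 hA1 + ind P E hE + ind P F hF + ind P CE hCE + ind P CF hCF
          + ind P D hD) * ξ := by rw [hsum, one_mul]
      rw [this, add_mul, add_mul, add_mul, add_mul, add_mul,
        hξA1, hξE, hξF, hξCE, hξCF, hξD]
      simp
    · have : η = (ind P A1 hA1 + ind P E hE + ind P F hF + ind P CE hCE + ind P CF hCF
          + ind P D hD) * η := by rw [hsum, one_mul]
      rw [this, add_mul, add_mul, add_mul, add_mul, add_mul,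
        hηA1, hηE, hηF, hηCE, hηCF, hηD]
      simp
  · -- x in the span
    refine ⟨ind P MAᶜ hMA.compl, 0, ?_⟩
    rw [zero_smul, add_zero, locxc]
    have h1 : (1 : Ω →ₘ[P] ℝ) • x = (ind P MA hMA + ind P MAᶜ hMA.compl) • x := by
      rw [hAAc]
    rw [one_smul, add_smul, hMAz, zero_add] at h1
    exact h1
  · -- y in the span
    refine ⟨κC * ind P C hC, ind P A2 hA2 + ind P D hD, ?_⟩
    have hy : y = ind P A1 hA1 • y + ind P A2 hA2 • y + (ind P C hC • y + ind P D hD • y) := by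
      have h1 : (1 : Ω →ₘ[P] ℝ) • y = ((ind P A1 hA1 + ind P A2 hA2)
          + (ind P C hC + ind P D hD)) • y := by
        rw [hA12s, hCDs, hAAc]
      rw [one_smul, add_smul, add_smul, add_smul] at h1
      exact h1
    have hCterm : ind P C hC • y = (κC * ind P C hC) • x₁ := by
      have h1 : ind P C hC • y = (κC * ind P C hC) • x :=
        mult_restrict hMC hC subCMC hMCe
      rw [h1, mul_smul, mul_smul, locxC]
    have hR : (κC * ind P C hC) • x₁ + (ind P A2 hA2 + ind P D hD) • y₁
        = ind P A2 hA2 • y + (ind P C hC • y + ind P D hD • y) := by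
      rw [add_smul, locyA2, locyD, ← hCterm]
      abel
    have hy2 := hy
    rw [vany A1 hA1 subA1MY, zero_add] at hy2
    rw [hR]
    exact hy2
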